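/- For every τ > 0 and every j ∈ ℕ there exists N ∈ ℕ such that for all n ≥ N, every x ∈ [0,1] with φ_α(x) > u_n(τ) satisfies F(ψ(G^j(x))) = λ^{−j} · F(ψ(x)). In particular, conditionally on {X_0 > u_n(τ)} the identity n·(X_j)^{−α} = λ^{−j} · n·(X_0)^{−α} holds with conditional probability 1 for all large n, which identifies the transformed tail process as Y_j = (1−θ)^{−j} Y_0 for j ≥ 0 with 1−θ = λ. (Key step in the proof of Proposition 4.6.) -/
import Mathlib


open Set MeasureTheory Filter
open scoped ENNReal Topology Classical

/-- The setup of Section 2 of the paper: a full-branched Markov linear map `G` on `[0,1]`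
with branch domains `I_1,…,I_{k_I}` (mapped affinely onto `[0,1]`) and complementary
intervals `J_j` (mapped affinely onto `(0,1)`), all of length at most `1/2`. -/
structure CantorData where
  kI : ℕ
  hkI : 1 ≤ kI
  a : ℕ → ℝ
  ha_lt : ∀ i, i + 1 < 2 * kI → a i < a (i + 1)
  ha0 : 0 ≤ a 0
  ha1 : a (2 * kI - 1) ≤ 1
  G : ℝ → ℝ
  hGmaps : Set.MapsTo G (Set.Icc 0 1) (Set.Icc 0 1)
  hGI : ∀ i < kI, ∃ s c : ℝ,
    |s| * (a (2 * i + 1) - a (2 * i)) = 1 ∧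
    (∀ x ∈ Set.Icc (a (2 * i)) (a (2 * i + 1)), G x = s * x + c) ∧
    Set.BijOn G (Set.Icc (a (2 * i)) (a (2 * i + 1))) (Set.Icc 0 1)
  hGJmid : ∀ i, i + 1 < kI → ∃ s c : ℝ,
    |s| * (a (2 * i + 2) - a (2 * i + 1)) = 1 ∧
    (∀ x ∈ Set.Ioo (a (2 * i + 1)) (a (2 * i + 2)), G x = s * x + c) ∧
    Set.SurjOn G (Set.Ioo (a (2 * i + 1)) (a (2 * i + 2))) (Set.Ioo 0 1)
  hGJleft : 0 < a 0 → ∃ s c : ℝ,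
    |s| * a 0 = 1 ∧
    (∀ x ∈ Set.Ico 0 (a 0), G x = s * x + c) ∧
    Set.SurjOn G (Set.Ico 0 (a 0)) (Set.Ioo 0 1)
  hGJright : a (2 * kI - 1) < 1 → ∃ s c : ℝ,
    |s| * (1 - a (2 * kI - 1)) = 1 ∧
    (∀ x ∈ Set.Ioc (a (2 * kI - 1)) 1, G x = s * x + c) ∧
    Set.SurjOn G (Set.Ioc (a (2 * kI - 1)) 1) (Set.Ioo 0 1)
  hIlen : ∀ i < kI, a (2 * i + 1) - a (2 * i) ≤ 1 / 2
  hJlenL : a 0 ≤ 1 / 2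
  hJlenR : 1 - a (2 * kI - 1) ≤ 1 / 2
  hJlenM : ∀ i, i + 1 < kI → a (2 * i + 2) - a (2 * i + 1) ≤ 1 / 2
  hkJ : (Set.Icc (0:ℝ) 1 \ ⋃ i ∈ Finset.range kI,
      Set.Icc (a (2 * i)) (a (2 * i + 1))).Nonempty

namespace CantorData

variable (S : CantorData)

/-- The union `⋃_i I_i` of the branch domains forming the Cantor construction. -/
def IU : Set ℝ := ⋃ i ∈ Finset.range S.kI, Set.Icc (S.a (2 * i)) (S.a (2 * i + 1))

/-- `Λ_n = {x ∈ [0,1] : G^{i-1}(x) ∈ ⋃ I for all 1 ≤ i ≤ n}`. -/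
def Lam (n : ℕ) : Set ℝ := {x ∈ Set.Icc (0:ℝ) 1 | ∀ i < n, S.G^[i] x ∈ S.IU}

/-- The dynamically defined Cantor set `Λ = ⋂_n Λ_n`. -/
def Cantor : Set ℝ := ⋂ n : ℕ, S.Lam n

/-- `λ = |⋃ I_i| = Σ_i 1/m_i`. -/
noncomputable def lam : ℝ := ∑ i ∈ Finset.range S.kI, (S.a (2 * i + 1) - S.a (2 * i))

/-- `𝔪`, Lebesgue measure on `[0,1]`. -/
noncomputable def mes (_S : CantorData) : Measure ℝ := volume.restrict (Set.Icc 0 1)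

/-- `ψ(x) = Σ_{i ∈ 𝓘_x} 2^{-i}` where `𝓘_x = {i ≥ 1 : G^{i-1}(x) ∉ ⋃ I}`. -/
noncomputable def psi (x : ℝ) : ℝ :=
  ∑' i : ℕ, if S.G^[i] x ∈ S.IU then 0 else (2:ℝ)⁻¹ ^ (i + 1)

/-- `F(t) = 𝔪{x : ψ(x) ≤ t}`, the distribution function of `ψ`. -/
noncomputable def F (t : ℝ) : ℝ := (S.mes {x | S.psi x ≤ t}).toReal

/-- `φ_α = (F ∘ ψ)^{-1/α}`, with value `∞` where `F ∘ ψ` vanishes. -/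
noncomputable def phi (α : ℝ) (x : ℝ) : ℝ≥0∞ :=
  ENNReal.ofReal (S.F (S.psi x)) ^ (-(1 / α))

/-- `X_n = φ_α ∘ G^n`. -/
noncomputable def X (α : ℝ) (n : ℕ) (x : ℝ) : ℝ≥0∞ := S.phi α (S.G^[n] x)

/-- `P_n`: the points following the Cantor construction exactly `n` steps and
never entering `⋃ I` afterwards. -/
def Pset (n : ℕ) : Set ℝ :=
  {x ∈ Set.Icc (0:ℝ) 1 | (∀ i < n, S.G^[i] x ∈ S.IU) ∧ ∀ i, n ≤ i → S.G^[i] x ∉ S.IU}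

/-- The family of partition intervals `(I,J)_1,…,(I,J)_{k_I+k_J}`. -/
def PieceFamily : Set (Set ℝ) :=
  ((fun i => Set.Icc (S.a (2 * i)) (S.a (2 * i + 1))) '' Set.Iio S.kI) ∪
  ((fun i => Set.Ioo (S.a (2 * i + 1)) (S.a (2 * i + 2))) '' {i | i + 1 < S.kI}) ∪
  {Set.Ico (0:ℝ) (S.a 0), Set.Ioc (S.a (2 * S.kI - 1)) 1}

/-- The depth-`d` cylinder `C_w = ⋂_{k=1}^d G^{-(k-1)}((I,J)_{w_k})`. -/
def Cyl (d : ℕ) (w : ℕ → Set ℝ) : Set ℝ := ⋂ k ∈ Finset.range d, (S.G^[k]) ⁻¹' (w k)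

/-- `C` is a depth-`d` cylinder. -/
def IsCylinder (d : ℕ) (C : Set ℝ) : Prop :=
  ∃ w : ℕ → Set ℝ, (∀ k < d, w k ∈ S.PieceFamily) ∧ C = S.Cyl d w

/-- `Υ⁺(A,d)`: union of the depth-`d` cylinders meeting `A`. -/
def upApprox (A : Set ℝ) (d : ℕ) : Set ℝ :=
  ⋃₀ {C | S.IsCylinder d C ∧ (C ∩ A).Nonempty}

/-- `Υ⁻(A,d)`: union of the depth-`d` cylinders contained in `A`. -/
def lowApprox (A : Set ℝ) (d : ℕ) : Set ℝ :=
  ⋃₀ {C | S.IsCylinder d C ∧ C ⊆ A}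

/-- `u_n(τ) = (n/τ)^{1/α}`. -/
noncomputable def un (_S : CantorData) (α τ : ℝ) (n : ℕ) : ℝ := ((n : ℝ) / τ) ^ (1 / α)

/-- `U_n(τ) = {X_0 > u_n(τ)}`. -/
noncomputable def Un (α τ : ℝ) (n : ℕ) : Set ℝ :=
  {x ∈ Set.Icc (0:ℝ) 1 | ENNReal.ofReal (S.un α τ n) < S.X α 0 x}

/-- `U_n^{(1)}(τ) = U_n(τ) ∩ G^{-1}([0,1] ∖ U_n(τ))`. -/
noncomputable def Un1 (α τ : ℝ) (n : ℕ) : Set ℝ :=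
  S.Un α τ n ∩ S.G ⁻¹' (Set.Icc 0 1 \ S.Un α τ n)

/-- `U_n(τ',τ'') = U_n(τ') ∖ U_n(τ'')`. -/
noncomputable def UnPair (α τ' τ'' : ℝ) (n : ℕ) : Set ℝ := S.Un α τ' n \ S.Un α τ'' n

/-- `U_n(τ',τ'')^{(1)}`. -/
noncomputable def UnPair1 (α τ' τ'' : ℝ) (n : ℕ) : Set ℝ :=
  S.UnPair α τ' τ'' n ∩ S.G ⁻¹' (Set.Icc 0 1 \ S.UnPair α τ' τ'' n)

/-- `j_{n,τ}`: the least `j` with `λ^j ≤ τ/n`. -/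
noncomputable def jn (τ : ℝ) (n : ℕ) : ℕ := sInf {j : ℕ | S.lam ^ j ≤ τ / n}

/-- `Γ_n^+`: outer approximation of `U_n(τ',τ'')^{(1)}` by depth-`2 j_{n,τ'}` cylinders. -/
noncomputable def GammaPlus (α τ' τ'' : ℝ) (n : ℕ) : Set ℝ :=
  S.upApprox (S.UnPair1 α τ' τ'' n) (2 * S.jn τ' n)

/-- `Γ_n^-`: inner approximation of `U_n(τ',τ'')^{(1)}` by depth-`2 j_{n,τ'}` cylinders. -/
noncomputable def GammaMinus (α τ' τ'' : ℝ) (n : ℕ) : Set ℝ :=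
  S.lowApprox (S.UnPair1 α τ' τ'' n) (2 * S.jn τ' n)

end CantorData


namespace CantorData

variable (S : CantorData)

lemma a_lt' : ∀ {i j : ℕ}, i < j → j ≤ 2 * S.kI - 1 → S.a i < S.a j := by
  intro i j hij hj
  induction j with
  | zero => omega
  | succ j ih =>
    have h2 : S.a j < S.a (j + 1) := S.ha_lt j (by have := S.hkI; omega)
    rcases Nat.lt_succ_iff_lt_or_eq.mp hij with h | h
    · exact (ih h (by omega)).trans h2
    · subst h; exact h2

lemma a_le' : ∀ {i j : ℕ}, i ≤ j → j ≤ 2 * S.kI - 1 → S.a i ≤ S.a j := by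
  intro i j hij hj
  rcases eq_or_lt_of_le hij with h | h
  · subst h; exact le_rfl
  · exact (S.a_lt' h hj).le

lemma len_pos {i : ℕ} (hi : i < S.kI) : 0 < S.a (2 * i + 1) - S.a (2 * i) := by
  have := S.ha_lt (2 * i) (by omega)
  linarith

lemma I_subset {i : ℕ} (hi : i < S.kI) :
    Set.Icc (S.a (2 * i)) (S.a (2 * i + 1)) ⊆ Set.Icc (0 : ℝ) 1 := by
  intro x hx
  have h0 : S.a 0 ≤ S.a (2 * i) := S.a_le' (Nat.zero_le _) (by omega)
  have h1 : S.a (2 * i + 1) ≤ S.a (2 * S.kI - 1) := S.a_le' (by omega) (by omega)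
  exact ⟨le_trans (le_trans S.ha0 h0) hx.1, le_trans hx.2 (le_trans h1 S.ha1)⟩

lemma I_disjoint {i j : ℕ} (hi : i < S.kI) (hj : j < S.kI) (hij : i ≠ j) :
    Disjoint (Set.Icc (S.a (2 * i)) (S.a (2 * i + 1)))
      (Set.Icc (S.a (2 * j)) (S.a (2 * j + 1))) := by
  rw [Set.disjoint_left]
  rcases Nat.lt_or_ge i j with h | h
  · intro x hx hx'
    have : S.a (2 * i + 1) < S.a (2 * j) := S.a_lt' (by omega) (by omega)
    linarith [hx.2, hx'.1]
  · have h' : j < i := by omega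
    intro x hx hx'
    have : S.a (2 * j + 1) < S.a (2 * i) := S.a_lt' (by omega) (by omega)
    linarith [hx.1, hx'.2]

lemma lam_pos : 0 < S.lam := by
  apply Finset.sum_pos
  · intro i hi; exact S.len_pos (Finset.mem_range.mp hi)
  · exact ⟨0, Finset.mem_range.mpr S.hkI⟩

lemma sum_head : ∀ k, 1 ≤ k → k ≤ S.kI →
    (∑ i ∈ Finset.range k, (S.a (2 * i + 1) - S.a (2 * i))) ≤ S.a (2 * k - 1) - S.a 0 := by
  intro k
  induction k with
  | zero => omega
  | succ k ih =>
    intro _ hk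
    rcases Nat.eq_or_lt_of_le (show 1 ≤ k + 1 by omega) with h | h
    · have : k = 0 := by omega
      subst this
      simp
    · have hk1 : 1 ≤ k := by omega
      have h1 := ih hk1 (by omega)
      rw [Finset.sum_range_succ]
      have h2 : S.a (2 * k - 1) ≤ S.a (2 * k) := S.a_le' (by omega) (by omega)
      have : 2 * (k + 1) - 1 = 2 * k + 1 := by omega
      rw [this]
      linarith

lemma sum_head2 : ∀ k, 2 ≤ k → k ≤ S.kI →
    (∑ i ∈ Finset.range k, (S.a (2 * i + 1) - S.a (2 * i))) ≤
      S.a (2 * k - 1) - S.a 0 - (S.a 2 - S.a 1) := by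
  intro k
  induction k with
  | zero => omega
  | succ k ih =>
    intro _ hk
    rcases Nat.eq_or_lt_of_le (show 2 ≤ k + 1 by omega) with h | h
    · have : k = 1 := by omega
      subst this
      rw [Finset.sum_range_succ]
      norm_num
      ring_nf
      nlinarith [S.a_le' (show (1:ℕ) ≤ 1 by omega) (show (1:ℕ) ≤ 2*S.kI-1 by omega)]
    · have hk1 : 2 ≤ k := by omega
      have h1 := ih hk1 (by omega)
      rw [Finset.sum_range_succ]
      have h2 : S.a (2 * k - 1) ≤ S.a (2 * k) := S.a_le' (by omega) (by omega)
      have : 2 * (k + 1) - 1 = 2 * k + 1 := by omega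
      rw [this]
      linarith

lemma lam_le_one : S.lam ≤ 1 := by
  have := S.sum_head S.kI S.hkI le_rfl
  have h0 := S.ha0
  have h1 := S.ha1
  unfold lam
  linarith

lemma lam_lt_one : S.lam < 1 := by
  rcases S.hkJ with ⟨y, hy, hyn⟩
  rcases Nat.eq_or_lt_of_le S.hkI with h1 | h2
  · -- kI = 1
    have hk : S.kI = 1 := h1.symm
    have hlam : S.lam = S.a 1 - S.a 0 := by
      unfold lam; rw [hk]; simp
    have : y ∉ Set.Icc (S.a 0) (S.a 1) := by
      intro hc
      have hi0 : (0:ℕ) ∈ Finset.range S.kI := Finset.mem_range.mpr S.hkI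
      exact hyn (Set.mem_biUnion hi0 (by simpa using hc))
    have h1' : S.a (2 * S.kI - 1) = S.a 1 := by rw [hk]
    rw [Set.mem_Icc] at *
    by_cases hy0 : y < S.a 0
    · have : 0 < S.a 0 := lt_of_le_of_lt hy.1 hy0
      have := S.ha1; rw [h1'] at this
      linarith [hlam]
    · push_neg at hy0
      have hy1 : S.a 1 < y := by
        by_contra hc
        push_neg at hc
        exact this ⟨hy0, hc⟩
      have := S.ha0
      linarith [hy.2, hlam]
  · -- kI ≥ 2
    have := S.sum_head2 S.kI h2 le_rfl
    have hgap : S.a 1 < S.a 2 := S.ha_lt 1 (by omega)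
    have h0 := S.ha0
    have h1 := S.ha1
    unfold lam
    linarith

lemma IU_measurable : MeasurableSet S.IU := by
  unfold IU
  exact (Finset.range S.kI).measurableSet_biUnion (fun i _ => measurableSet_Icc)

lemma IU_subset : S.IU ⊆ Set.Icc (0 : ℝ) 1 := by
  intro x hx
  rcases Set.mem_iUnion₂.mp hx with ⟨i, hi, hxi⟩
  exact S.I_subset (Finset.mem_range.mp hi) hxi

lemma G_IU_mem {x : ℝ} (hx : x ∈ S.IU) : S.G x ∈ Set.Icc (0 : ℝ) 1 :=
  S.hGmaps (S.IU_subset hx)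

lemma volume_IU : volume S.IU = ENNReal.ofReal S.lam := by
  unfold IU
  rw [measure_biUnion_finset]
  · unfold lam
    rw [ENNReal.ofReal_sum_of_nonneg (fun i hi => (S.len_pos (Finset.mem_range.mp hi)).le)]
    exact Finset.sum_congr rfl (fun i hi => by rw [Real.volume_Icc])
  · intro i hi j hj hij
    exact S.I_disjoint (Finset.mem_range.mp hi) (Finset.mem_range.mp hj) hij
  · intro i hi
    exact measurableSet_Icc

lemma psi_term_nonneg (x : ℝ) (i : ℕ) :
    0 ≤ (if S.G^[i] x ∈ S.IU then 0 else (2:ℝ)⁻¹ ^ (i + 1)) := by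
  split <;> positivity

lemma psi_term_le (x : ℝ) (i : ℕ) :
    (if S.G^[i] x ∈ S.IU then 0 else (2:ℝ)⁻¹ ^ (i + 1)) ≤ (2:ℝ)⁻¹ ^ (i + 1) := by
  split
  · positivity
  · exact le_rfl

lemma geom_summable (_S : CantorData) : Summable (fun i : ℕ => (2:ℝ)⁻¹ ^ (i + 1)) := by
  have h : Summable (fun i : ℕ => (2:ℝ)⁻¹ ^ i) :=
    summable_geometric_of_lt_one (by norm_num) (by norm_num)
  simpa [pow_succ, mul_comm] using h.mul_left (2:ℝ)⁻¹

lemma psi_summable (x : ℝ) :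
    Summable (fun i : ℕ => if S.G^[i] x ∈ S.IU then 0 else (2:ℝ)⁻¹ ^ (i + 1)) :=
  Summable.of_nonneg_of_le (S.psi_term_nonneg x) (S.psi_term_le x) S.geom_summable

lemma psi_nonneg (x : ℝ) : 0 ≤ S.psi x :=
  tsum_nonneg (S.psi_term_nonneg x)

lemma geom_tsum (_S : CantorData) : ∑' i : ℕ, (2:ℝ)⁻¹ ^ (i + 1) = 1 := by
  have h : ∑' i : ℕ, (2:ℝ)⁻¹ ^ i = 2 := by
    rw [tsum_geometric_of_lt_one (by norm_num) (by norm_num)]; norm_num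
  calc ∑' i : ℕ, (2:ℝ)⁻¹ ^ (i + 1) = ∑' i : ℕ, (2:ℝ)⁻¹ * (2:ℝ)⁻¹ ^ i := by
        congr 1; funext i; rw [pow_succ, mul_comm]
    _ = (2:ℝ)⁻¹ * ∑' i : ℕ, (2:ℝ)⁻¹ ^ i := tsum_mul_left
    _ = 1 := by rw [h]; norm_num

lemma psi_le_one (x : ℝ) : S.psi x ≤ 1 := by
  calc S.psi x ≤ ∑' i : ℕ, (2:ℝ)⁻¹ ^ (i + 1) :=
        Summable.tsum_le_tsum (S.psi_term_le x) (S.psi_summable x) S.geom_summable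
    _ = 1 := S.geom_tsum

lemma psi_rec (x : ℝ) :
    S.psi x = (if x ∈ S.IU then 0 else (2:ℝ)⁻¹) + (2:ℝ)⁻¹ * S.psi (S.G x) := by
  unfold psi
  rw [Summable.tsum_eq_zero_add (S.psi_summable x)]
  congr 1
  · simp
  · calc (∑' i : ℕ, if S.G^[i + 1] x ∈ S.IU then 0 else (2:ℝ)⁻¹ ^ (i + 1 + 1))
        = ∑' i : ℕ, (2:ℝ)⁻¹ * (if S.G^[i] (S.G x) ∈ S.IU then 0 else (2:ℝ)⁻¹ ^ (i + 1)) := by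
          congr 1; funext i
          rw [Function.iterate_succ_apply]
          split
          · simp
          · rw [pow_succ]; ring
      _ = (2:ℝ)⁻¹ * S.psi (S.G x) := tsum_mul_left

lemma psi_G {x : ℝ} (hx : x ∈ S.IU) : S.psi (S.G x) = 2 * S.psi x := by
  have h := S.psi_rec x
  rw [if_pos hx, zero_add] at h
  linarith

lemma psi_ge {x : ℝ} {i : ℕ} (h : S.G^[i] x ∉ S.IU) : (2:ℝ)⁻¹ ^ (i + 1) ≤ S.psi x := by
  have := Summable.le_tsum (S.psi_summable x) i (fun j _ => S.psi_term_nonneg x j)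
  rwa [if_neg h] at this

lemma psi_half {x : ℝ} (hx : x ∉ S.IU) : (2:ℝ)⁻¹ ≤ S.psi x := by
  simpa using S.psi_ge (i := 0) (by simpa using hx)

lemma F_eq_volume (t : ℝ) :
    S.F t = (volume ({x | S.psi x ≤ t} ∩ Set.Icc (0:ℝ) 1)).toReal := by
  unfold F mes
  rw [Measure.restrict_apply' measurableSet_Icc]

lemma F_vol_ne_top (t : ℝ) : volume ({x | S.psi x ≤ t} ∩ Set.Icc (0:ℝ) 1) ≠ ⊤ := by
  refine ne_top_of_le_ne_top ?_ (measure_mono Set.inter_subset_right)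
  rw [Real.volume_Icc]
  exact ENNReal.ofReal_ne_top

lemma F_nonneg (t : ℝ) : 0 ≤ S.F t := ENNReal.toReal_nonneg

lemma F_mono {t t' : ℝ} (h : t ≤ t') : S.F t ≤ S.F t' := by
  rw [S.F_eq_volume, S.F_eq_volume]
  refine ENNReal.toReal_mono (S.F_vol_ne_top t') (measure_mono ?_)
  exact Set.inter_subset_inter_left _ (fun x hx => le_trans hx h)

lemma F_one : S.F 1 = 1 := by
  rw [S.F_eq_volume]
  have : {x | S.psi x ≤ 1} ∩ Set.Icc (0:ℝ) 1 = Set.Icc (0:ℝ) 1 := by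
    apply Set.inter_eq_right.mpr
    intro x _
    exact S.psi_le_one x
  rw [this, Real.volume_Icc]
  norm_num

/-- Measure of a finite union of sets separated by disjoint measurable sets. -/
lemma vol_biUnion (_S : CantorData) (A B : ℕ → Set ℝ) (k : ℕ)
    (hms : ∀ i < k, MeasurableSet (B i)) (hsub : ∀ i < k, A i ⊆ B i)
    (hdis : ∀ i j, i < j → j < k → Disjoint (B i) (B j)) :
    volume (⋃ i ∈ Finset.range k, A i) = ∑ i ∈ Finset.range k, volume (A i) := by
  induction k with
  | zero => simp
  | succ k ih =>
    rw [Finset.sum_range_succ, ← ih (fun i hi => hms i (by omega))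
      (fun i hi => hsub i (by omega)) (fun i j hij hjk => hdis i j hij (by omega))]
    have hU : (⋃ i ∈ Finset.range (k+1), A i) =
        (⋃ i ∈ Finset.range k, A i) ∪ A k := by
      rw [Finset.range_add_one]
      simp [Set.biUnion_insert, Set.union_comm]
    rw [hU]
    have key := measure_inter_add_diff (μ := volume)
      ((⋃ i ∈ Finset.range k, A i) ∪ A k) (hms k (by omega))
    have h1 : ((⋃ i ∈ Finset.range k, A i) ∪ A k) ∩ B k = A k := by
      apply Set.Subset.antisymm
      · rintro x ⟨hx, hxB⟩
        rcases hx with hx | hx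
        · exfalso
          rcases Set.mem_iUnion₂.mp hx with ⟨i, hi, hxi⟩
          have hik : i < k := Finset.mem_range.mp hi
          exact Set.disjoint_left.mp (hdis i k hik (by omega))
            (hsub i (by omega) hxi) hxB
        · exact hx
      · intro x hx
        exact ⟨Or.inr hx, hsub k (by omega) hx⟩
    have h2 : ((⋃ i ∈ Finset.range k, A i) ∪ A k) \ B k = ⋃ i ∈ Finset.range k, A i := by
      apply Set.Subset.antisymm
      · rintro x ⟨hx, hxB⟩
        rcases hx with hx | hx
        · exact hx
        · exact absurd (hsub k (by omega) hx) hxB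
      · intro x hx
        rcases Set.mem_iUnion₂.mp hx with ⟨i, hi, hxi⟩
        have hik : i < k := Finset.mem_range.mp hi
        refine ⟨Or.inl hx, fun hxB => ?_⟩
        exact Set.disjoint_left.mp (hdis i k hik (by omega)) (hsub i (by omega) hxi) hxB
    rw [h1, h2] at key
    rw [← key, add_comm]

lemma F_scale {t : ℝ} (_ht : 0 ≤ t) (ht2 : t < 2⁻¹) : S.F t = S.lam * S.F (2 * t) := by
  classical
  set B := {x | S.psi x ≤ 2 * t} ∩ Set.Icc (0:ℝ) 1 with hB
  -- the branch sets
  set C : ℕ → Set ℝ := fun i =>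
    Set.Icc (S.a (2 * i)) (S.a (2 * i + 1)) ∩ {x | S.psi (S.G x) ≤ 2 * t} with hC
  -- step 1 : set identity
  have hset : {x | S.psi x ≤ t} ∩ Set.Icc (0:ℝ) 1 = ⋃ i ∈ Finset.range S.kI, C i := by
    apply Set.Subset.antisymm
    · rintro x ⟨hxt, hx01⟩
      have hxIU : x ∈ S.IU := by
        by_contra hxn
        have := S.psi_half hxn
        have := lt_of_le_of_lt (le_trans this hxt) ht2
        exact lt_irrefl _ this
      rcases Set.mem_iUnion₂.mp hxIU with ⟨i, hi, hxi⟩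
      refine Set.mem_iUnion₂.mpr ⟨i, hi, hxi, ?_⟩
      have := S.psi_G hxIU
      simp only [Set.mem_setOf_eq]
      rw [this]
      linarith [Set.mem_setOf_eq ▸ hxt]
    · intro x hx
      rcases Set.mem_iUnion₂.mp hx with ⟨i, hi, hxi, hxt⟩
      have hxIU : x ∈ S.IU := Set.mem_biUnion hi hxi
      have hx01 := S.IU_subset hxIU
      have := S.psi_G hxIU
      refine ⟨?_, hx01⟩
      simp only [Set.mem_setOf_eq] at hxt ⊢
      linarith
  -- step 3 : each C i is an affine preimage of B
  have hvol : ∀ i < S.kI, volume (C i) = ENNReal.ofReal (S.a (2*i+1) - S.a (2*i)) * volume B := by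
    intro i hi
    obtain ⟨s, c, hs1, hline, hbij⟩ := S.hGI i hi
    have hlen := S.len_pos hi
    have hs0 : s ≠ 0 := by
      intro h; rw [h] at hs1; simp at hs1
    have hLinj : Function.Injective (fun x : ℝ => s * x + c) := by
      intro x y hxy
      simp only at hxy
      have : s * x = s * y := by linarith
      exact mul_left_cancel₀ hs0 this
    have himg : (fun x : ℝ => s * x + c) '' Set.Icc (S.a (2*i)) (S.a (2*i+1)) =
        Set.Icc (0:ℝ) 1 := by
      rw [← Set.image_congr hline]
      exact hbij.image_eq
    have hpre : (fun x : ℝ => s * x + c) ⁻¹' Set.Icc (0:ℝ) 1 =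
        Set.Icc (S.a (2*i)) (S.a (2*i+1)) := by
      rw [← himg, Set.preimage_image_eq _ hLinj]
    have hCL : C i = (fun x : ℝ => s * x + c) ⁻¹' B := by
      apply Set.Subset.antisymm
      · rintro x ⟨hxi, hxt⟩
        have hGx : S.G x = s * x + c := hline x hxi
        have hmem : s * x + c ∈ Set.Icc (0:ℝ) 1 := by
          rw [← hGx]; exact hbij.mapsTo hxi
        refine ⟨?_, hmem⟩
        show S.psi ((fun x => s * x + c) x) ≤ 2 * t
        simp only
        rw [← hGx]; exact hxt
      · rintro x ⟨hxt, hmem⟩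
        have hxi : x ∈ Set.Icc (S.a (2*i)) (S.a (2*i+1)) := by
          rw [← hpre]; exact hmem
        have hGx : S.G x = s * x + c := hline x hxi
        exact ⟨hxi, by simp only [Set.mem_setOf_eq]; rw [hGx]; exact hxt⟩
    have hsplit : (fun x : ℝ => s * x + c) ⁻¹' B =
        (s * ·) ⁻¹' ((· + c) ⁻¹' B) := rfl
    rw [hCL, hsplit, Real.volume_preimage_mul_left hs0,
      measure_preimage_add_right volume c B]
    congr 1
    have habs : |s| = (S.a (2*i+1) - S.a (2*i))⁻¹ := by
      field_simp at hs1 ⊢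
      linarith [hs1]
    rw [abs_inv, habs, inv_inv]
  -- step 2 : additivity
  have hadd : volume (⋃ i ∈ Finset.range S.kI, C i) =
      ∑ i ∈ Finset.range S.kI, volume (C i) := by
    apply S.vol_biUnion C (fun i => Set.Icc (S.a (2 * i)) (S.a (2 * i + 1))) S.kI
    · intro i _; exact measurableSet_Icc
    · intro i _; exact Set.inter_subset_left
    · intro i j hij hjk
      exact S.I_disjoint (by omega) hjk (by omega)
  -- combine
  have hsum : ∑ i ∈ Finset.range S.kI, volume (C i) = ENNReal.ofReal S.lam * volume B := by
    rw [Finset.sum_congr rfl (fun i hi => hvol i (Finset.mem_range.mp hi))]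
    rw [← Finset.sum_mul]
    congr 1
    unfold lam
    rw [ENNReal.ofReal_sum_of_nonneg (fun i hi => (S.len_pos (Finset.mem_range.mp hi)).le)]
  rw [S.F_eq_volume, hset, hadd, hsum, ENNReal.toReal_mul, ENNReal.toReal_ofReal S.lam_pos.le,
    S.F_eq_volume]

lemma F_half : S.lam ≤ S.F 2⁻¹ := by
  rw [S.F_eq_volume]
  have hsub : S.IU ⊆ {x | S.psi x ≤ 2⁻¹} ∩ Set.Icc (0:ℝ) 1 := by
    intro x hx
    refine ⟨?_, S.IU_subset hx⟩
    have h := S.psi_G hx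
    have h1 := S.psi_nonneg x
    have h2 := S.psi_le_one (S.G x)
    simp only [Set.mem_setOf_eq]
    linarith
  have hmo : volume S.IU ≤ volume ({x | S.psi x ≤ 2⁻¹} ∩ Set.Icc (0:ℝ) 1) :=
    measure_mono hsub
  rw [S.volume_IU] at hmo
  calc S.lam = (ENNReal.ofReal S.lam).toReal := (ENNReal.toReal_ofReal S.lam_pos.le).symm
    _ ≤ _ := ENNReal.toReal_mono (S.F_vol_ne_top _) hmo

lemma F_pow : ∀ k : ℕ, S.lam ^ (k + 1) ≤ S.F ((2:ℝ)⁻¹ ^ (k + 1)) := by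
  intro k
  induction k with
  | zero => simpa using S.F_half
  | succ k ih =>
    have hsc : S.F ((2:ℝ)⁻¹ ^ (k + 2)) = S.lam * S.F (2 * (2:ℝ)⁻¹ ^ (k + 2)) := by
      apply S.F_scale (by positivity)
      calc ((2:ℝ)⁻¹) ^ (k + 2) ≤ (2:ℝ)⁻¹ ^ 2 :=
            pow_le_pow_of_le_one (by norm_num) (by norm_num) (by omega)
        _ < 2⁻¹ := by norm_num
    have h2 : 2 * ((2:ℝ)⁻¹) ^ (k + 2) = (2:ℝ)⁻¹ ^ (k + 1) := by
      rw [show k + 2 = (k + 1) + 1 from rfl, pow_succ]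
      ring
    rw [hsc, h2]
    calc S.lam ^ (k + 2) = S.lam * S.lam ^ (k + 1) := by ring
      _ ≤ S.lam * S.F ((2:ℝ)⁻¹ ^ (k + 1)) := by
          exact mul_le_mul_of_nonneg_left ih S.lam_pos.le

lemma F_key (j : ℕ) (x : ℝ) (hpsi : S.psi x < (2:ℝ)⁻¹ ^ (j + 1)) :
    S.F (S.psi x) = S.lam ^ j * S.F (S.psi (S.G^[j] x)) := by
  have hIU : ∀ i ≤ j, S.G^[i] x ∈ S.IU := by
    intro i hi
    by_contra hc
    have h1 := S.psi_ge hc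
    have h2 : ((2:ℝ)⁻¹) ^ (j + 1) ≤ (2:ℝ)⁻¹ ^ (i + 1) :=
      pow_le_pow_of_le_one (by norm_num) (by norm_num) (by omega)
    linarith
  have hpsik : ∀ k ≤ j, S.psi (S.G^[k] x) = 2 ^ k * S.psi x := by
    intro k hk
    induction k with
    | zero => simp
    | succ k ih =>
      rw [Function.iterate_succ_apply', S.psi_G (hIU k (by omega)), ih (by omega)]
      ring
  have main : ∀ k ≤ j, S.F (S.psi x) = S.lam ^ k * S.F (S.psi (S.G^[k] x)) := by
    intro k hk
    induction k with
    | zero => simp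
    | succ k ih =>
      have hklt : k ≤ j := by omega
      have ht0 : 0 ≤ S.psi (S.G^[k] x) := S.psi_nonneg _
      have ht2 : S.psi (S.G^[k] x) < 2⁻¹ := by
        rw [hpsik k hklt]
        have h1 : (2:ℝ) ^ k * S.psi x < 2 ^ k * (2:ℝ)⁻¹ ^ (j + 1) := by
          apply mul_lt_mul_of_pos_left hpsi (by positivity)
        have h2 : (2:ℝ) ^ k * (2:ℝ)⁻¹ ^ (j + 1) ≤ 2⁻¹ := by
          rw [show j + 1 = k + (j - k + 1) by omega, pow_add, ← mul_assoc,
            ← mul_pow, show (2:ℝ) * 2⁻¹ = 1 by norm_num, one_pow, one_mul]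
          calc ((2:ℝ)⁻¹) ^ (j - k + 1) ≤ (2:ℝ)⁻¹ ^ 1 :=
                pow_le_pow_of_le_one (by norm_num) (by norm_num) (by omega)
            _ = 2⁻¹ := pow_one _
        linarith
      have hstep : S.F (S.psi (S.G^[k] x)) = S.lam * S.F (2 * S.psi (S.G^[k] x)) :=
        S.F_scale ht0 ht2
      have h2psi : 2 * S.psi (S.G^[k] x) = S.psi (S.G^[k+1] x) := by
        rw [Function.iterate_succ_apply', S.psi_G (hIU k hklt)]
      rw [ih hklt, hstep, h2psi, pow_succ]
      ring
  exact main j le_rfl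

end CantorData


/-- for every `τ > 0` and `j`, for all large `n`, every `x ∈ [0,1]` with
`φ_α(x) > u_n(τ)` satisfies `F(ψ(G^j x)) = λ^{-j} F(ψ(x))`. -/
theorem tail_process_identity (S : CantorData) (α : ℝ)
    (hα : α ∈ Set.Ioo (0:ℝ) 2) (τ : ℝ) (hτ : 0 < τ) (j : ℕ) :
    ∃ N : ℕ, ∀ n : ℕ, N ≤ n → ∀ x ∈ Set.Icc (0:ℝ) 1,
      ENNReal.ofReal (S.un α τ n) < S.phi α x →
      S.F (S.psi (S.G^[j] x)) = S.lam ^ (-(j:ℤ)) * S.F (S.psi x) := by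
  have hl0 := S.lam_pos
  have hlj : 0 < S.lam ^ (j + 1) := pow_pos hl0 _
  refine ⟨⌈τ / S.lam ^ (j + 1)⌉₊ + 1, ?_⟩
  intro n hn x hx hφ
  have hn1 : 1 ≤ n := by omega
  have hnpos : (0:ℝ) < n := by exact_mod_cast hn1
  have hτn : τ / n < S.lam ^ (j + 1) := by
    rw [div_lt_iff₀ hnpos]
    have h1 : τ / S.lam ^ (j + 1) < (n:ℝ) := by
      have h2 : τ / S.lam ^ (j + 1) ≤ (⌈τ / S.lam ^ (j + 1)⌉₊ : ℝ) := Nat.le_ceil _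
      have h3 : ((⌈τ / S.lam ^ (j + 1)⌉₊ + 1 : ℕ) : ℝ) ≤ (n:ℝ) := by exact_mod_cast hn
      push_cast at h3
      linarith
    calc τ = (τ / S.lam ^ (j + 1)) * S.lam ^ (j + 1) := by field_simp
      _ < n * S.lam ^ (j + 1) := mul_lt_mul_of_pos_right h1 hlj
      _ = S.lam ^ (j + 1) * n := mul_comm _ _
  have hF : S.F (S.psi x) < S.lam ^ (j + 1) := by
    rcases lt_or_ge 0 (S.F (S.psi x)) with hFpos | hFle
    · have hφ' : ((n:ℝ) / τ) ^ (1 / α) < (S.F (S.psi x)) ^ (-(1 / α)) := by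
        have h1 : S.phi α x = ENNReal.ofReal ((S.F (S.psi x)) ^ (-(1 / α))) := by
          unfold CantorData.phi
          rw [ENNReal.ofReal_rpow_of_pos hFpos]
        rw [h1] at hφ
        unfold CantorData.un at hφ
        exact (ENNReal.ofReal_lt_ofReal_iff (Real.rpow_pos_of_pos hFpos _)).mp hφ
      have hFτ : S.F (S.psi x) < τ / n := by
        by_contra hc
        push_neg at hc
        have hτnpos : (0:ℝ) < τ / n := div_pos hτ hnpos
        have h2 : (S.F (S.psi x)) ^ (-(1 / α)) ≤ (τ / n) ^ (-(1 / α)) :=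
          Real.rpow_le_rpow_of_nonpos hτnpos hc
            (neg_nonpos.mpr (one_div_pos.mpr hα.1).le)
        have h3 : (τ / n) ^ (-(1 / α)) = ((n:ℝ) / τ) ^ (1 / α) := by
          rw [Real.rpow_neg hτnpos.le, ← Real.inv_rpow hτnpos.le, inv_div]
        rw [h3] at h2
        linarith
      linarith
    · linarith
  have hψ : S.psi x < (2:ℝ)⁻¹ ^ (j + 1) := by
    by_contra hc
    push_neg at hc
    have h1 := S.F_mono hc
    have h2 := S.F_pow j
    linarith
  have hkey := S.F_key j x hψ
  have hpow : S.lam ^ (-(j:ℤ)) = (S.lam ^ j)⁻¹ := by rw [zpow_neg, zpow_natCast]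
  rw [hpow, hkey, ← mul_assoc, inv_mul_cancel₀ (pow_pos hl0 j).ne', one_mul]
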